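/- arXiv:2506.07716 — 9 statements merged into one kernel-verified Lean document; each statement's English description precedes it below -/
import Mathlib

section
/- For all real v > 1 and γ > 1, the function ψ(v,γ) = (γ-1)v^{γ+1} - (γ+1)v^{γ-1} + 2 is strictly positive. -/
/-!
ψ(·, γ) vanishes at `v = 1`, and its derivative `(γ² - 1)(v^γ - v^(γ-2))` is positive for
`v > 1`, so ψ(·, γ) is strictly increasing on `[1, ∞)`.
-/

open Set

/-- `psi γ v` is ψ(v, γ): the arguments are swapped so that `psi γ` is ψ(·, γ). -/
noncomputable def psi (γ v : ℝ) : ℝ :=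
  (γ - 1) * v ^ (γ + 1) - (γ + 1) * v ^ (γ - 1) + 2

lemma psi_one (γ : ℝ) : psi γ 1 = 0 := by
  simp only [psi, Real.one_rpow]
  ring

lemma hasDerivAt_psi (γ : ℝ) {x : ℝ} (hx : x ≠ 0) :
    HasDerivAt (psi γ) ((γ ^ 2 - 1) * (x ^ γ - x ^ (γ - 2))) x := by
  have hplus := (Real.hasDerivAt_rpow_const (p := γ + 1) (Or.inl hx)).const_mul (γ - 1)
  have hminus := (Real.hasDerivAt_rpow_const (p := γ - 1) (Or.inl hx)).const_mul (γ + 1)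
  rw [show γ + 1 - 1 = γ by ring] at hplus
  rw [show γ - 1 - 1 = γ - 2 by ring] at hminus
  exact ((hplus.sub hminus).add_const 2).congr_deriv (by ring)

lemma strictMonoOn_psi {γ : ℝ} (hγ : 1 < γ ^ 2) : StrictMonoOn (psi γ) (Ici 1) := by
  have hne : ∀ x ∈ Ici (1 : ℝ), x ≠ 0 := fun x hx => (zero_lt_one.trans_le hx).ne'
  refine strictMonoOn_of_hasDerivWithinAt_pos (convex_Ici 1)
    (fun x hx => (hasDerivAt_psi γ (hne x hx)).continuousAt.continuousWithinAt)
    (fun x hx => (hasDerivAt_psi γ (hne x (interior_subset hx))).hasDerivWithinAt) ?_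
  intro x hx
  rw [interior_Ici] at hx
  have hpow : x ^ (γ - 2) < x ^ γ := Real.rpow_lt_rpow_of_exponent_lt hx (by linarith)
  exact mul_pos (by linarith) (sub_pos.mpr hpow)

theorem psi_pos_of_gt_one (v γ : ℝ) (hv : 1 < v) (hγ : 1 < γ) :
    0 < (γ - 1) * v ^ (γ + 1) - (γ + 1) * v ^ (γ - 1) + 2 := by
  have hγ2 : 1 < γ ^ 2 := by nlinarith
  calc 0 = psi γ 1 := (psi_one γ).symm
    _ < psi γ v := strictMonoOn_psi hγ2 self_mem_Ici hv.le hv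
end

section
/- For all real v with 0 < v < 1 and γ < -1, the function ψ(v,γ) = (γ-1)v^{γ+1} - (γ+1)v^{γ-1} + 2 is strictly positive. -/
/-!
Since `s ↦ v ^ s` is strictly convex for `v ≠ 1` and `γ + 1` lies strictly between `γ - 1` and `0`,
the chord of this function over `[γ - 1, 0]` lies strictly above it at `γ + 1`; cleared of
denominators, this chord inequality is `ψ(v, γ) > 0`.
-/

open Set

theorem Real.strictConvexOn_rpow_left {b : ℝ} (hb₀ : 0 < b) (hb₁ : b ≠ 1) :
    StrictConvexOn ℝ univ fun x : ℝ ↦ b ^ x := by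
  refine ⟨convex_univ, fun s _ t _ hst p q hp hq hpq ↦ ?_⟩
  have hlog : Real.log b ≠ 0 := Real.log_ne_zero_of_pos_of_ne_one hb₀ hb₁
  have hst' : Real.log b * s ≠ Real.log b * t := by
    rwa [Ne, mul_right_inj' hlog]
  simpa [Real.rpow_def_of_pos hb₀, mul_add, mul_left_comm (Real.log b)] using
    strictConvexOn_exp.2 (mem_univ _) (mem_univ _) hst' hp hq hpq

theorem Real.mul_rpow_lt_mul_rpow_add_sub {x a b : ℝ} (hx₀ : 0 < x) (hx₁ : x ≠ 1) (hba : b < a)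
    (hab : 0 < a * b) : a * x ^ b < b * x ^ a + (a - b) := by
  have hconv := Real.strictConvexOn_rpow_left hx₀ hx₁
  rcases lt_or_gt_of_ne (left_ne_zero_of_mul hab.ne') with ha | ha
  · have hchord := hconv.secant_strict_mono_aux1 (mem_univ b) (mem_univ 0) hba ha
    simp only [Real.rpow_zero] at hchord
    linarith
  · have hb : 0 < b := pos_of_mul_pos_right hab ha.le
    have hchord := hconv.secant_strict_mono_aux1 (mem_univ 0) (mem_univ a) hb hba
    simp only [Real.rpow_zero] at hchord
    linarith

theorem psi_pos_of_lt_neg_one (v γ : ℝ) (hv0 : 0 < v) (hv1 : v < 1) (hγ : γ < -1) :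
    0 < (γ - 1) * v ^ (γ + 1) - (γ + 1) * v ^ (γ - 1) + 2 := by
  have hprod : 0 < (γ + 1) * (γ - 1) := mul_pos_of_neg_of_neg (by linarith) (by linarith)
  have key := Real.mul_rpow_lt_mul_rpow_add_sub hv0 hv1.ne (by linarith) hprod
  linarith
end

section
/- For all real v > 1 and γ > 1, F_d(v,γ) = γ·v² - 2·v^{γ+1} + v² - γ + 1 is strictly negative. -/
/-!
With `u = v²` and `p = (γ + 1) / 2` we have `v^(γ+1) = u^p` and
`F_d(v, γ) = 2 (1 + p (u - 1) - u^p)`, which is negative by the strict Bernoulli inequality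
`1 + p s < (1 + s)^p` for `p > 1`, `s = u - 1 > 0`.
-/

theorem Fd_neg (v γ : ℝ) (hv : 1 < v) (hγ : 1 < γ) :
    γ * v ^ 2 - 2 * v ^ (γ + 1) + v ^ 2 - γ + 1 < 0 := by
  have hp : 1 < (γ + 1) / 2 := by linarith
  have hs : 0 < v ^ 2 - 1 := by nlinarith
  have bernoulli := one_add_mul_self_lt_rpow_one_add (by linarith) hs.ne' hp
  have hpow : (1 + (v ^ 2 - 1)) ^ ((γ + 1) / 2) = v ^ (γ + 1) := by
    rw [add_sub_cancel, ← Real.rpow_natCast_mul (by linarith)]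
    congr 1
    push_cast
    ring
  rw [hpow] at bernoulli
  linarith
end

section
/- For all real v > 1 and γ > 1, f(v,γ) = v^{2γ} + γ·v^{γ-1} - 1 - γ·v^{γ+1} is strictly positive. -/
/-! With `x = log v` one has `f(v, γ) = 2 v^γ (sinh (γ x) - γ sinh x)`, and
`sinh (γ x) > γ sinh x` for `γ > 1`, `x > 0` because `t ↦ sinh (γ t) - γ sinh t` vanishes at `0`
and has derivative `γ (cosh (γ t) - cosh t) > 0` for `t > 0`. -/

open Real Set

theorem Real.mul_sinh_lt_sinh_mul {a x : ℝ} (ha : 1 < a) (hx : 0 < x) :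
    a * sinh x < sinh (a * x) := by
  let g : ℝ → ℝ := fun t => sinh (a * t) - a * sinh t
  have hg : ∀ t, HasDerivAt g (a * (cosh (a * t) - cosh t)) t := fun t => by
    have h := ((hasDerivAt_id t).const_mul a).sinh.sub ((hasDerivAt_sinh t).const_mul a)
    simp only [id, mul_one] at h
    exact h.congr_deriv (by ring)
  have hmono : StrictMonoOn g (Ici 0) := by
    refine strictMonoOn_of_deriv_pos (convex_Ici 0) ?_ fun t ht => ?_
    · exact fun t _ => (hg t).continuousAt.continuousWithinAt
    · rw [interior_Ici, mem_Ioi] at ht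
      have hcosh : cosh t < cosh (a * t) := by
        rw [cosh_lt_cosh, abs_of_pos ht, abs_of_pos (by positivity)]
        nlinarith
      rw [(hg t).deriv]
      exact mul_pos (by linarith) (sub_pos.mpr hcosh)
  simpa [g] using hmono self_mem_Ici hx.le hx

theorem Real.rpow_two_mul_add_sub_eq_sinh {v : ℝ} (hv : 0 < v) (γ : ℝ) :
    v ^ (2 * γ) + γ * v ^ (γ - 1) - 1 - γ * v ^ (γ + 1) =
      2 * v ^ γ * (sinh (γ * log v) - γ * sinh (log v)) := by
  have hvγ : 0 < v ^ γ := rpow_pos_of_pos hv γ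
  rw [← log_rpow hv, sinh_log hvγ, sinh_log hv, mul_comm 2 γ, rpow_mul hv.le, rpow_two,
    rpow_sub_one hv.ne', rpow_add_one hv.ne']
  field_simp
  ring

theorem f_pos (v γ : ℝ) (hv : 1 < v) (hγ : 1 < γ) :
    0 < v ^ (2 * γ) + γ * v ^ (γ - 1) - 1 - γ * v ^ (γ + 1) := by
  have hv0 : 0 < v := by linarith
  rw [rpow_two_mul_add_sub_eq_sinh hv0]
  exact mul_pos (mul_pos two_pos (rpow_pos_of_pos hv0 γ))
    (sub_pos.mpr (mul_sinh_lt_sinh_mul hγ (log_pos hv)))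
end

section
/- For all real v with 0 < v < 1 and γ < -1, the quantity F_2(v,γ) = γ·v² - 2·v^{γ+1} + v² - γ + 1 is strictly negative. -/
/-! `F₂(v, γ) = (γ + 1) (v - 1) ^ 2 - 2 (v ^ (γ + 1) - 1 - (γ + 1) (v - 1))`. For `γ + 1 < 0` the
first term is negative, and the bracket is positive by Bernoulli's inequality for a negative
exponent. -/

theorem Real.one_add_mul_sub_one_lt_rpow_of_neg {x p : ℝ} (hx : 0 < x) (hx1 : x ≠ 1)
    (hp : p < 0) : 1 + p * (x - 1) < x ^ p := by
  have hlog : Real.log x < x - 1 := Real.log_lt_sub_one_of_pos hx hx1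
  calc 1 + p * (x - 1) < 1 + p * Real.log x := by linarith [mul_lt_mul_of_neg_left hlog hp]
    _ ≤ Real.exp (Real.log x * p) := by linarith [Real.add_one_le_exp (Real.log x * p)]
    _ = x ^ p := (Real.rpow_def_of_pos hx p).symm

theorem F2_neg (v γ : ℝ) (hv0 : 0 < v) (hv1 : v < 1) (hγ : γ < -1) :
    γ * v ^ 2 - 2 * v ^ (γ + 1) + v ^ 2 - γ + 1 < 0 := by
  have hbernoulli : 1 + (γ + 1) * (v - 1) < v ^ (γ + 1) :=
    Real.one_add_mul_sub_one_lt_rpow_of_neg hv0 hv1.ne (by linarith)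
  have hquad : (γ + 1) * (v - 1) ^ 2 < 0 :=
    mul_neg_of_neg_of_pos (by linarith) (sq_pos_of_neg (by linarith))
  linear_combination hquad + 2 * hbernoulli
end

section
/- For all real v with 0 < v < 1 and γ < -1, the quantity F_1(v,γ) = ((γ-1)v² - γ - 1)·v^{2γ} + (γ+1)v² - γ + 1 is strictly positive. -/
/-!
With `x = v²` and `t = -γ > 1` one has `F₁ = x ^ γ * F1Reduced t x`, and `F1Reduced t 1 = 0`.
The derivative of `F1Reduced t` is `(t + 1) (t x ^ (t - 1) - (t - 1) x ^ t - 1)`, negative on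
`(0, 1)` by Bernoulli's inequality `1 + t (1/x - 1) < (1/x) ^ t`, so `F1Reduced t` decreases to `0`
on `(0, 1]`.
-/

open Real Set

theorem mul_rpow_sub_one_lt {t x : ℝ} (ht : 1 < t) (hx0 : 0 < x) (hx1 : x < 1) :
    t * x ^ (t - 1) < 1 + (t - 1) * x ^ t := by
  have hbern : 1 + t * (x⁻¹ - 1) < (1 + (x⁻¹ - 1)) ^ t :=
    one_add_mul_self_lt_rpow_one_add (by linarith [inv_pos.2 hx0])
      (sub_ne_zero.2 (one_lt_inv₀ hx0 |>.2 hx1).ne') ht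
  rw [add_sub_cancel, inv_rpow hx0.le] at hbern
  have hxt : 0 < x ^ t := rpow_pos_of_pos hx0 t
  rw [rpow_sub_one hx0.ne']
  field_simp at hbern ⊢
  linarith

noncomputable def F1Reduced (t x : ℝ) : ℝ :=
  (t - 1) - (t + 1) * x + ((1 - t) * x + (t + 1)) * x ^ t

theorem F1Reduced_one (t : ℝ) : F1Reduced t 1 = 0 := by
  simp [F1Reduced]

theorem hasDerivAt_F1Reduced (t : ℝ) {x : ℝ} (hx : 0 < x) :
    HasDerivAt (F1Reduced t) ((t + 1) * (t * x ^ (t - 1) - (t - 1) * x ^ t - 1)) x := by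
  have hpow : HasDerivAt (fun y : ℝ => y ^ t) (t * x ^ (t - 1)) x :=
    hasDerivAt_rpow_const (Or.inl hx.ne')
  have hlin : HasDerivAt (fun y : ℝ => (1 - t) * y + (t + 1)) (1 - t) x := by
    simpa using ((hasDerivAt_id x).const_mul (1 - t)).add_const (t + 1)
  refine ((((hasDerivAt_id x).const_mul (t + 1)).const_sub (t - 1)).fun_add
    (hlin.fun_mul hpow)).congr_deriv ?_
  rw [rpow_sub_one hx.ne']
  field_simp
  ring

theorem strictAntiOn_F1Reduced {t : ℝ} (ht : 1 < t) : StrictAntiOn (F1Reduced t) (Ioc 0 1) := by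
  refine strictAntiOn_of_deriv_neg (convex_Ioc 0 1)
    (fun x hx => (hasDerivAt_F1Reduced t hx.1).continuousAt.continuousWithinAt) fun x hx => ?_
  rw [interior_Ioc] at hx
  rw [(hasDerivAt_F1Reduced t hx.1).deriv]
  exact mul_neg_of_pos_of_neg (by linarith) (by linarith [mul_rpow_sub_one_lt ht hx.1 hx.2])

theorem F1Reduced_pos {t x : ℝ} (ht : 1 < t) (hx0 : 0 < x) (hx1 : x < 1) : 0 < F1Reduced t x :=
  F1Reduced_one t ▸ strictAntiOn_F1Reduced ht ⟨hx0, hx1.le⟩ ⟨one_pos, le_rfl⟩ hx1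

theorem F1_pos (v γ : ℝ) (hv0 : 0 < v) (hv1 : v < 1) (hγ : γ < -1) :
    0 < ((γ - 1) * v ^ (2 : ℕ) - γ - 1) * v ^ (2 * γ) + (γ + 1) * v ^ (2 : ℕ) - γ + 1 := by
  set x := v ^ (2 : ℕ)
  have hx0 : 0 < x := by positivity
  have hx1 : x < 1 := pow_lt_one₀ hv0.le hv1 two_ne_zero
  have hpow : v ^ (2 * γ) = x ^ γ := by rw [rpow_mul hv0.le, rpow_two]
  have hfactor :
      ((γ - 1) * x - γ - 1) * x ^ γ + (γ + 1) * x - γ + 1 = x ^ γ * F1Reduced (-γ) x := by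
    have : x ^ γ * x ^ (-γ) = 1 := by rw [← rpow_add hx0, add_neg_cancel, rpow_zero]
    unfold F1Reduced
    linear_combination (-((γ + 1) * x - γ + 1)) * this
  rw [hpow, hfactor]
  exact mul_pos (rpow_pos_of_pos hx0 γ) (F1Reduced_pos (by linarith) hx0 hx1)
end

section
/- For all real v with 0 < v < 1 and γ < -1, the third partial derivative with respect to v of F_1(v,γ) = ((γ-1)v² - γ - 1)·v^{2γ} + (γ+1)v² - γ + 1 equals 4γ(γ²-1)·v^{2γ-3}·(2γ(v²-1) + v² + 1), and this expression is strictly negative. -/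
/-!
On `(0, ∞)` we have `v² · v^{2γ} = v^{2γ+2}`, so there `F₁` is a linear combination of
`v^{2γ+2}`, `v^{2γ}` and a quadratic; the third derivative then follows from
`(d/dv)³ v^p = p (p - 1) (p - 2) v^{p-3}`. For the sign, `4γ(γ² - 1) < 0` when `γ < -1`, while
`2γ(v² - 1) + v² + 1 ≥ v² + 1 > 0` when `γ ≤ 0` and `v ≤ 1`.
-/

open Real Set

theorem iteratedDeriv_rpow_const (p x : ℝ) (k : ℕ) :
    iteratedDeriv k (fun x : ℝ => x ^ p) x = (descPochhammer ℝ k).eval p * x ^ (p - k) := by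
  rw [iteratedDeriv_eq_iterate, iter_deriv_rpow_const]

theorem iteratedDeriv_three_rpow_const (p x : ℝ) :
    iteratedDeriv 3 (fun x : ℝ => x ^ p) x = p * (p - 1) * (p - 2) * x ^ (p - 3) := by
  simp [iteratedDeriv_rpow_const, descPochhammer_succ_right]

theorem iteratedDeriv_three_quadratic (a b x : ℝ) :
    iteratedDeriv 3 (fun w : ℝ => a * w ^ 2 + b) x = 0 := by
  rw [iteratedDeriv_fun_add (by fun_prop) (by fun_prop)]
  simp [iteratedDeriv_const]

noncomputable def F1 (γ w : ℝ) : ℝ :=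
  ((γ - 1) * w ^ (2 : ℕ) - γ - 1) * w ^ (2 * γ) + (γ + 1) * w ^ (2 : ℕ) - γ + 1

theorem F1_eqOn_Ioi (γ : ℝ) :
    EqOn (F1 γ)
      (fun w => (γ - 1) * w ^ (2 * γ + 2) - (γ + 1) * w ^ (2 * γ) + ((γ + 1) * w ^ 2 + (1 - γ)))
      (Ioi 0) := by
  intro w (hw : 0 < w)
  have hpow : w ^ (2 * γ + 2) = w ^ (2 * γ) * w ^ 2 := by rw [rpow_add hw, rpow_two]
  simp only [F1, hpow]
  ring

theorem iteratedDeriv_three_F1 (γ : ℝ) {v : ℝ} (hv : 0 < v) :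
    iteratedDeriv 3 (F1 γ) v
      = 4 * γ * (γ ^ 2 - 1) * v ^ (2 * γ - 3) * (2 * γ * (v ^ 2 - 1) + v ^ 2 + 1) := by
  have hv0 : v ≠ 0 := hv.ne'
  rw [((F1_eqOn_Ioi γ).eventuallyEq_of_mem (Ioi_mem_nhds hv)).iteratedDeriv_eq 3,
    iteratedDeriv_fun_add (by fun_prop (disch := assumption)) (by fun_prop),
    iteratedDeriv_fun_sub (by fun_prop (disch := assumption)) (by fun_prop (disch := assumption)),
    iteratedDeriv_const_mul_field, iteratedDeriv_const_mul_field, iteratedDeriv_three_rpow_const,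
    iteratedDeriv_three_rpow_const, iteratedDeriv_three_quadratic,
    show 2 * γ + 2 - 3 = 2 * γ - 3 + 2 by ring, rpow_add hv, rpow_two]
  ring

theorem F1_third_deriv_closed_form_neg {γ v : ℝ} (hγ : γ < -1) (hv : 0 < v) (hv1 : v ≤ 1) :
    4 * γ * (γ ^ 2 - 1) * v ^ (2 * γ - 3) * (2 * γ * (v ^ 2 - 1) + v ^ 2 + 1) < 0 := by
  have hcoeff : 4 * γ * (γ ^ 2 - 1) < 0 := by nlinarith
  have hsq : v ^ 2 ≤ 1 := pow_le_one₀ hv.le hv1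
  have hfactor : 0 < 2 * γ * (v ^ 2 - 1) + v ^ 2 + 1 := by
    nlinarith [mul_nonneg (neg_nonneg.2 (by linarith : γ ≤ 0)) (sub_nonneg.2 hsq)]
  exact mul_neg_of_neg_of_pos (mul_neg_of_neg_of_pos hcoeff (rpow_pos_of_pos hv _)) hfactor

theorem F1_third_deriv (γ : ℝ) (hγ : γ < -1) :
    ∀ v : ℝ, 0 < v → v < 1 →
      iteratedDeriv 3
        (fun w : ℝ => ((γ - 1) * w ^ (2 : ℕ) - γ - 1) * w ^ (2 * γ) + (γ + 1) * w ^ (2 : ℕ) - γ + 1) v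
        = 4 * γ * (γ ^ 2 - 1) * v ^ (2 * γ - 3) * (2 * γ * (v ^ 2 - 1) + v ^ 2 + 1) ∧
      4 * γ * (γ ^ 2 - 1) * v ^ (2 * γ - 3) * (2 * γ * (v ^ 2 - 1) + v ^ 2 + 1) < 0 :=
  fun _ hv hv1 => ⟨iteratedDeriv_three_F1 γ hv, F1_third_deriv_closed_form_neg hγ hv hv1.le⟩
end

section
/- The polynomial p(u) = 17u¹⁰ - 227u⁹ - 71526u⁸ - 610029u⁷ - 1615317u⁶ + 4554960u⁵ - 1615317u⁴ - 610029u³ - 71526u² - 227u + 17 has exactly one real root in the interval (1, ∞); moreover p is negative on (1, u*) and positive on (u*, ∞), where u* is that root. -/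
/-!
On `(1, 75]` the polynomial is negative: expanded in powers of `u - 1`, all of its coefficients
except the leading one are negative, and the leading term cannot win before `u = 75`.
Expanded in powers of `u - 75`, all its non-constant coefficients are positive, so it is strictly
increasing on `[75, ∞)`; as `p 75 < 0 < p 76`, it has exactly one zero there, and the sign
pattern follows.
-/

theorem existsUnique_sign_change_of_strictMonoOn {f : ℝ → ℝ} {l a b : ℝ} (hla : l < a)
    (hab : a ≤ b) (hneg : ∀ u, l < u → u ≤ a → f u < 0) (hmono : StrictMonoOn f (Set.Ici a))
    (hcont : ContinuousOn f (Set.Icc a b)) (hb : 0 < f b) :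
    ∃! x, l < x ∧ f x = 0 ∧ (∀ u, l < u → u < x → f u < 0) ∧ ∀ u, x < u → 0 < f u := by
  obtain ⟨x, ⟨hax, -⟩, hx⟩ := intermediate_value_Ioo hab hcont ⟨hneg a hla le_rfl, hb⟩
  refine ⟨x, ⟨hla.trans hax, hx, fun u hlu hux => ?_, fun u hxu => ?_⟩, ?_⟩
  · rcases le_or_gt u a with hua | hau
    · exact hneg u hlu hua
    · exact hx ▸ hmono hau.le hax.le hux
  · exact hx ▸ hmono hax.le (hax.trans hxu).le hxu
  · rintro y ⟨-, hy, hbelow, habove⟩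
    rcases lt_trichotomy y x with hyx | rfl | hxy
    · exact absurd hx (habove x hyx).ne'
    · rfl
    · exact absurd hx (hbelow x (hla.trans hax) hxy).ne

noncomputable def p (u : ℝ) : ℝ :=
  17 * u ^ 10 - 227 * u ^ 9 - 71526 * u ^ 8 - 610029 * u ^ 7 - 1615317 * u ^ 6
    + 4554960 * u ^ 5 - 1615317 * u ^ 4 - 610029 * u ^ 3 - 71526 * u ^ 2 - 227 * u + 17

theorem p_neg_of_one_lt_of_le {u : ℝ} (h1 : 1 < u) (h75 : u ≤ 75) : p u < 0 := by
  have hs : 0 ≤ u - 1 := by linarith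
  have ht : 0 ≤ 75 - u := by linarith
  unfold p
  nlinarith [mul_nonneg ht (pow_nonneg hs 9), mul_nonneg ht (pow_nonneg hs 8),
    mul_nonneg ht (pow_nonneg hs 7), mul_nonneg ht (pow_nonneg hs 6),
    pow_nonneg hs 6, pow_nonneg hs 5, pow_nonneg hs 4, pow_nonneg hs 3, pow_nonneg hs 2, hs]

theorem p_strictMonoOn : StrictMonoOn p (Set.Ici 75) := by
  intro a ha b _ hab
  have hx : (0 : ℝ) ≤ a - 75 := sub_nonneg.mpr ha
  have hxy : a - 75 ≤ b - 75 := by linarith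
  unfold p
  nlinarith [pow_le_pow_left₀ hx hxy 10, pow_le_pow_left₀ hx hxy 9,
    pow_le_pow_left₀ hx hxy 8, pow_le_pow_left₀ hx hxy 7, pow_le_pow_left₀ hx hxy 6,
    pow_le_pow_left₀ hx hxy 5, pow_le_pow_left₀ hx hxy 4, pow_le_pow_left₀ hx hxy 3,
    pow_le_pow_left₀ hx hxy 2]

theorem continuous_p : Continuous p := by
  unfold p
  fun_prop

theorem p_unique_root :
    ∃! ustar : ℝ, 1 < ustar ∧
      (17 * ustar ^ 10 - 227 * ustar ^ 9 - 71526 * ustar ^ 8 - 610029 * ustar ^ 7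
        - 1615317 * ustar ^ 6 + 4554960 * ustar ^ 5 - 1615317 * ustar ^ 4 - 610029 * ustar ^ 3
        - 71526 * ustar ^ 2 - 227 * ustar + 17 = 0) ∧
      (∀ u : ℝ, 1 < u → u < ustar →
        17 * u ^ 10 - 227 * u ^ 9 - 71526 * u ^ 8 - 610029 * u ^ 7 - 1615317 * u ^ 6
          + 4554960 * u ^ 5 - 1615317 * u ^ 4 - 610029 * u ^ 3 - 71526 * u ^ 2 - 227 * u + 17 < 0) ∧
      (∀ u : ℝ, ustar < u →
        0 < 17 * u ^ 10 - 227 * u ^ 9 - 71526 * u ^ 8 - 610029 * u ^ 7 - 1615317 * u ^ 6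
          + 4554960 * u ^ 5 - 1615317 * u ^ 4 - 610029 * u ^ 3 - 71526 * u ^ 2 - 227 * u + 17) := by
  have hp76 : 0 < p 76 := by norm_num [p]
  exact existsUnique_sign_change_of_strictMonoOn (by norm_num : (1 : ℝ) < 75) (by norm_num)
    (fun _ => p_neg_of_one_lt_of_le) p_strictMonoOn continuous_p.continuousOn hp76
end

section
/- For every real u > 1, H_{31}(u,u) = u·(17u¹⁰ + 25u⁹ - 41u⁸ - 493u⁷ + 1419u⁶ - 657u⁵ - 599u⁴ + 29u³ + 1316u² - 1880u + 1056) is strictly positive. -/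
theorem H31_diag_factor_pos_of_one_le (u : ℝ) (hu : 1 ≤ u) :
    0 < 17 * u ^ 10 + 25 * u ^ 9 - 41 * u ^ 8 - 493 * u ^ 7 + 1419 * u ^ 6 - 657 * u ^ 5
      - 599 * u ^ 4 + 29 * u ^ 3 + 1316 * u ^ 2 - 1880 * u + 1056 := by
  obtain ⟨t, ht, rfl⟩ : ∃ t : ℝ, 0 ≤ t ∧ u = t + 1 := ⟨u - 1, by linarith, by ring⟩
  have taylor_at_one :
      17 * (t + 1) ^ 10 + 25 * (t + 1) ^ 9 - 41 * (t + 1) ^ 8 - 493 * (t + 1) ^ 7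
        + 1419 * (t + 1) ^ 6 - 657 * (t + 1) ^ 5 - 599 * (t + 1) ^ 4 + 29 * (t + 1) ^ 3
        + 1316 * (t + 1) ^ 2 - 1880 * (t + 1) + 1056
      = 17 * t ^ 10 + 195 * t ^ 9 + 949 * t ^ 8 + 2119 * t ^ 7 + 2490 * t ^ 6 + 2642 * t ^ 5
        + 3996 * t ^ 4 + 4032 * t ^ 3 + 2688 * t ^ 2 + 288 * t + 192 := by
    ring
  rw [taylor_at_one]
  positivity

theorem H31_diag_pos (u : ℝ) (hu : 1 < u) :
    0 < u * (17 * u ^ 10 + 25 * u ^ 9 - 41 * u ^ 8 - 493 * u ^ 7 + 1419 * u ^ 6 - 657 * u ^ 5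
      - 599 * u ^ 4 + 29 * u ^ 3 + 1316 * u ^ 2 - 1880 * u + 1056) :=
  mul_pos (by linarith) (H31_diag_factor_pos_of_one_le u hu.le)
end
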